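/- arXiv:1906.10339 — 2 statements merged into one kernel-verified Lean document; each statement's English description precedes it below -/
import Mathlib

section
/- Let y₁,…,yₙ be vectors in a Hilbert space H and m ≤ dim Span(y₁,…,yₙ). The minimization of J(D) = Σ_{k=1}^n ‖y_k − Π_D y_k‖² over all m-dimensional subspaces D of Span(y₁,…,yₙ) admits a minimizer, and the optimal value equals Σ_{i=m+1}^{d} σᵢ², where σ₁ ≥ σ₂ ≥ ⋯ ≥ σ_d > 0 are the nonzero singular values of the operator Y: ℝⁿ → H sending the k-th standard basis vector to y_k, and d = rank Y. -/
open scoped RealInnerProductSpace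

noncomputable section

section auxlem

variable {H : Type*} [NormedAddCommGroup H] [InnerProductSpace ℝ H]

lemma aux_inner_sum {ι : Type*} [Fintype ι] (v : ι → H) (a b : ι → ℝ) :
    ⟪∑ i, a i • v i, ∑ j, b j • v j⟫ = ∑ i, ∑ j, a i * b j * ⟪v i, v j⟫ := by
  rw [sum_inner]
  refine Finset.sum_congr rfl fun i _ => ?_
  rw [inner_sum]
  refine Finset.sum_congr rfl fun j _ => ?_
  rw [real_inner_smul_left, real_inner_smul_right]
  ring

lemma aux_sq_sum {n : ℕ} (u : Fin n → Fin n → ℝ)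
    (hcol : ∀ i j, ∑ k, u i k * u j k = if i = j then 1 else 0) (b : Fin n → ℝ) :
    ∑ k, (∑ i, b i * u i k) ^ 2 = ∑ i, b i ^ 2 := by
  have e1 : ∀ k : Fin n, (∑ i, b i * u i k) ^ 2 = ∑ i, ∑ j, (b i * b j) * (u i k * u j k) := by
    intro k
    rw [sq, Finset.sum_mul_sum]
    exact Finset.sum_congr rfl fun i _ => Finset.sum_congr rfl fun j _ => by ring
  rw [Finset.sum_congr rfl fun k _ => e1 k, Finset.sum_comm]
  have e2 : ∀ i : Fin n, ∑ k, ∑ j, (b i * b j) * (u i k * u j k) = b i ^ 2 := by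
    intro i
    rw [Finset.sum_comm]
    have e3 : ∀ j : Fin n, ∑ k, (b i * b j) * (u i k * u j k)
        = (b i * b j) * if i = j then 1 else 0 := fun j => by rw [← Finset.mul_sum, hcol]
    rw [Finset.sum_congr rfl fun j _ => e3 j]
    simp [sq]
  rw [Finset.sum_congr rfl fun i _ => e2 i]

lemma aux_bessel {ι : Type*} [Fintype ι] {g : ι → H} (hg : Orthonormal ℝ g) (x : H) :
    ∑ j, ⟪x, g j⟫ ^ 2 ≤ ‖x‖ ^ 2 := by
  classical
  set s := ∑ j, ⟪x, g j⟫ • g j with hs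
  have h1 : ⟪x, s⟫ = ∑ j, ⟪x, g j⟫ ^ 2 := by
    rw [hs, inner_sum]
    exact Finset.sum_congr rfl fun j _ => by rw [real_inner_smul_right]; ring
  have h1' : ⟪s, x⟫ = ∑ j, ⟪x, g j⟫ ^ 2 := by rw [real_inner_comm]; exact h1
  have h2 : ⟪s, s⟫ = ∑ j, ⟪x, g j⟫ ^ 2 := by
    rw [hs, aux_inner_sum]
    rw [Finset.sum_congr rfl (fun i (_ : i ∈ Finset.univ) => Finset.sum_congr rfl
      (fun j _ => by rw [orthonormal_iff_ite.mp hg i j]))]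
    simp [sq]
  have h3 : (0:ℝ) ≤ ⟪x - s, x - s⟫ := real_inner_self_nonneg
  have h4 : ⟪x - s, x - s⟫ = ⟪x, x⟫ - ∑ j, ⟪x, g j⟫ ^ 2 := by
    rw [inner_sub_sub_self, h1, h1', h2]; ring
  have h5 : ⟪x, x⟫ = ‖x‖ ^ 2 := real_inner_self_eq_norm_sq x
  linarith [h4 ▸ h3]

lemma aux_filter_eq {n m : ℕ} (hmn : m ≤ n) :
    Finset.filter (fun i : Fin n => (i:ℕ) < m) Finset.univ
      = Finset.map (Fin.castLEEmb hmn) Finset.univ := by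
  ext i
  simp only [Finset.mem_filter, Finset.mem_univ, true_and, Finset.mem_map,
    Fin.castLEEmb, Function.Embedding.coeFn_mk, Fin.ext_iff]
  constructor
  · intro hi
    exact ⟨⟨i, hi⟩, rfl⟩
  · rintro ⟨j, hj⟩
    simp only [Fin.coe_castLE] at hj
    exact hj ▸ j.2

lemma aux_castsum {α : Type*} [AddCommMonoid α] {n m : ℕ} (hmn : m ≤ n) (F : Fin n → α) :
    ∑ j : Fin m, F (Fin.castLE hmn j)
      = ∑ i ∈ Finset.filter (fun i : Fin n => (i:ℕ) < m) Finset.univ, F i := by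
  rw [aux_filter_eq hmn, Finset.sum_map]
  rfl

lemma aux_kyfan {n m : ℕ} (hmn : m ≤ n) (lam t : Fin n → ℝ)
    (hlam0 : ∀ i, 0 ≤ lam i) (hanti : ∀ i j : Fin n, i ≤ j → lam j ≤ lam i)
    (ht0 : ∀ i, 0 ≤ t i) (ht1 : ∀ i, t i ≤ 1) (hsum : ∑ i, t i = (m:ℝ)) :
    ∑ i, lam i * t i ≤ ∑ i : Fin n, if (i:ℕ) < m then lam i else 0 := by
  have hcard : ∑ i : Fin n, (if (i:ℕ) < m then (1:ℝ) else 0) = (m:ℝ) := by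
    rw [Finset.sum_boole, aux_filter_eq hmn]
    simp
  rcases lt_or_eq_of_le hmn with hlt | heq
  · set c := lam ⟨m, hlt⟩ with hc
    have key : ∀ i : Fin n, lam i * t i - (if (i:ℕ) < m then lam i else 0)
        ≤ c * (t i - (if (i:ℕ) < m then 1 else 0)) := by
      intro i
      by_cases him : (i:ℕ) < m
      · simp only [him, if_pos]
        have h1 : c ≤ lam i := hanti i ⟨m, hlt⟩ (by simpa [Fin.le_def] using him.le)
        nlinarith [ht1 i, ht0 i]
      · simp only [him, if_neg, not_false_iff]
        have h1 : lam i ≤ c := hanti ⟨m, hlt⟩ i (by simpa [Fin.le_def] using not_lt.mp him)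
        nlinarith [ht0 i]
    have h2 : ∑ i, (lam i * t i - (if (i:ℕ) < m then lam i else 0))
        ≤ ∑ i, c * (t i - (if (i:ℕ) < m then (1:ℝ) else 0)) := Finset.sum_le_sum fun i _ => key i
    rw [Finset.sum_sub_distrib] at h2
    have h3 : ∑ i, c * (t i - (if (i:ℕ) < m then (1:ℝ) else 0)) = 0 := by
      rw [← Finset.mul_sum, Finset.sum_sub_distrib, hsum, hcard]; ring
    linarith
  · have e : ∀ i : Fin n, (if (i:ℕ) < m then lam i else 0) = lam i :=
      fun i => if_pos (heq ▸ i.2)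
    rw [Finset.sum_congr rfl fun i _ => e i]
    exact Finset.sum_le_sum fun i _ => by nlinarith [hlam0 i, ht1 i, ht0 i]

end auxlem


/-- The POD cost of a candidate subspace `D` for finitely many snapshots
`y 0, …, y (n-1)` (for a closed subspace,
`Metric.infDist (y k) D = ‖y k - Π_D (y k)‖`). -/
def podCost {H : Type*} [NormedAddCommGroup H] [InnerProductSpace ℝ H]
    {n : ℕ} (y : Fin n → H) (D : Submodule ℝ H) : ℝ :=
  ∑ k : Fin n, Metric.infDist (y k) (D : Set H) ^ 2

/-- The Gram matrix of the snapshots; it represents `Y*Y` in the standard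
basis of `ℝⁿ`, where `Y : ℝⁿ → H` maps the `k`-th basis vector to `y k`.
Its eigenvalues are the squares of the singular values of `Y`. -/
def gram {H : Type*} [NormedAddCommGroup H] [InnerProductSpace ℝ H]
    {n : ℕ} (y : Fin n → H) : Matrix (Fin n) (Fin n) ℝ :=
  Matrix.of fun j k : Fin n => (⟪y j, y k⟫ : ℝ)

set_option maxHeartbeats 4000000 in
theorem stmt2
    {H : Type*} [NormedAddCommGroup H] [InnerProductSpace ℝ H] [CompleteSpace H]
    {n : ℕ} (y : Fin n → H) (m : ℕ)
    (hm : m ≤ Module.finrank ℝ (Submodule.span ℝ (Set.range y)))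
    (hG : (gram y).IsHermitian) :
    ∃ D : Submodule ℝ H,
      D ≤ Submodule.span ℝ (Set.range y) ∧
      Module.finrank ℝ D = m ∧
      (∀ D' : Submodule ℝ H, D' ≤ Submodule.span ℝ (Set.range y) →
        Module.finrank ℝ D' = m → podCost y D ≤ podCost y D') ∧
      ∃ σ : Fin n → ℝ,
        Antitone σ ∧ (∀ i, 0 ≤ σ i) ∧
        (∀ i : Fin n, 0 < σ i ↔ (i : ℕ) < Module.finrank ℝ (Submodule.span ℝ (Set.range y))) ∧
        (∃ e : Equiv.Perm (Fin n), ∀ i, σ i ^ 2 = hG.eigenvalues (e i)) ∧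
        podCost y D = ∑ i : Fin n, if m ≤ (i : ℕ) then σ i ^ 2 else 0 := by
  classical
  set e : Equiv.Perm (Fin n) := Tuple.sort (fun i => -hG.eigenvalues i) with he
  set μ : Fin n → ℝ := fun i => hG.eigenvalues (e i) with hμdef
  have hμanti : Antitone μ := by
    intro i j hij
    have h := Tuple.monotone_sort (fun i => -hG.eigenvalues i) hij
    simp only [Function.comp_apply] at h
    simp only [hμdef, he]
    linarith
  set u : Fin n → Fin n → ℝ := fun i k => hG.eigenvectorBasis (e i) k with hudef
  have hcol : ∀ i j, ∑ k, u i k * u j k = if i = j then 1 else 0 := by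
    intro i j
    have h := orthonormal_iff_ite.mp hG.eigenvectorBasis.orthonormal (e i) (e j)
    rw [PiLp.inner_apply] at h
    simp only [RCLike.inner_apply, starRingEnd_apply, star_trivial] at h
    simpa [hudef, EmbeddingLike.apply_eq_iff_eq, mul_comm] using h
  have hrow : ∀ k j, ∑ i, u i k * u i j = if k = j then 1 else 0 := by
    intro k j
    have hre : ∑ i, u i k * u i j
        = ∑ i, hG.eigenvectorBasis i k * hG.eigenvectorBasis i j := by
      rw [← Equiv.sum_comp e (fun i' => hG.eigenvectorBasis i' k * hG.eigenvectorBasis i' j)]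
    rw [hre]
    have h := hG.eigenvectorBasis.sum_inner_mul_inner (EuclideanSpace.single k (1:ℝ))
      (EuclideanSpace.single j (1:ℝ))
    simp only [EuclideanSpace.inner_single_left, EuclideanSpace.inner_single_right,
      starRingEnd_apply, star_trivial, one_mul, mul_one] at h
    rw [h]
    simp [EuclideanSpace.single_apply, eq_comm]
  have hGu : ∀ i k, ∑ j, gram y k j * u i j = μ i * u i k := by
    intro i k
    have h := congrFun (hG.mulVec_eigenvectorBasis (e i)) k
    simpa [Matrix.mulVec, dotProduct, hudef, hμdef] using h
  set σ : Fin n → ℝ := fun i => Real.sqrt (μ i) with hσdef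
  set Yu : Fin n → H := fun i => ∑ k, u i k • y k with hYudef
  have hyYu : ∀ k i, ⟪y k, Yu i⟫ = μ i * u i k := by
    intro k i
    rw [hYudef]
    rw [inner_sum]
    have e1 : ∀ j, ⟪y k, u i j • y j⟫ = gram y k j * u i j := by
      intro j
      rw [real_inner_smul_right]
      show u i j * ⟪y k, y j⟫ = _
      rw [show gram y k j = ⟪y k, y j⟫ from rfl]
      ring
    rw [Finset.sum_congr rfl fun j _ => e1 j, hGu]
  have hYuYu : ∀ i j, ⟪Yu i, Yu j⟫ = if i = j then μ i else 0 := by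
    intro i j
    have e1 : ⟪Yu i, Yu j⟫ = ∑ k, u i k * ⟪y k, Yu j⟫ := by
      rw [hYudef]
      rw [sum_inner]
      exact Finset.sum_congr rfl fun k _ => by rw [real_inner_smul_left]
    have e1' : ∀ k : Fin n, u i k * ⟪y k, Yu j⟫ = u i k * (μ j * u j k) :=
      fun k => by rw [hyYu k j]
    rw [e1, Finset.sum_congr rfl fun k _ => e1' k]
    have e2 : ∑ k, u i k * (μ j * u j k) = μ j * ∑ k, u i k * u j k := by
      rw [Finset.mul_sum]; exact Finset.sum_congr rfl fun k _ => by ring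
    rw [e2, hcol]
    by_cases hij : i = j <;> simp [hij]
  have hμ0 : ∀ i, 0 ≤ μ i := by
    intro i
    have h := hYuYu i i
    rw [if_pos rfl] at h
    rw [← h]
    exact real_inner_self_nonneg
  have hσsq : ∀ i, σ i ^ 2 = μ i := fun i => Real.sq_sqrt (hμ0 i)
  have hσ0 : ∀ i, 0 ≤ σ i := fun i => Real.sqrt_nonneg _
  have hσanti : Antitone σ := fun i j hij => Real.sqrt_le_sqrt (hμanti hij)
  have hσpos : ∀ i, (0 < σ i ↔ 0 < μ i) := fun i => Real.sqrt_pos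
  have hYu0 : ∀ i, σ i = 0 → Yu i = 0 := by
    intro i h0
    have hμz : μ i = 0 := by
      have h := hσsq i
      rw [h0] at h
      simpa using h.symm
    have h : ⟪Yu i, Yu i⟫ = (0:ℝ) := by rw [hYuYu, if_pos rfl, hμz]
    exact inner_self_eq_zero.mp h
  set f : Fin n → H := fun i => (σ i)⁻¹ • Yu i with hfdef
  have hf0 : ∀ i, σ i = 0 → f i = 0 := by
    intro i h0
    rw [hfdef]
    show (σ i)⁻¹ • Yu i = 0
    rw [hYu0 i h0, smul_zero]
  have hyf : ∀ k i, ⟪y k, f i⟫ = σ i * u i k := by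
    intro k i
    rcases eq_or_lt_of_le (hσ0 i) with h0 | hpos
    · rw [hf0 i h0.symm, inner_zero_right, ← h0, zero_mul]
    · rw [hfdef]
      show ⟪y k, (σ i)⁻¹ • Yu i⟫ = _
      rw [real_inner_smul_right, hyYu, ← hσsq i]
      field_simp
  have hff : ∀ i j, ⟪f i, f j⟫ = if i = j ∧ 0 < σ i then 1 else 0 := by
    intro i j
    have e1 : ⟪f i, f j⟫ = (σ i)⁻¹ * ((σ j)⁻¹ * ⟪Yu i, Yu j⟫) := by
      rw [hfdef]
      show ⟪(σ i)⁻¹ • Yu i, (σ j)⁻¹ • Yu j⟫ = _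
      rw [real_inner_smul_left, real_inner_smul_right]
    rw [e1, hYuYu]
    by_cases hij : i = j
    · subst hij
      rcases eq_or_lt_of_le (hσ0 i) with h0 | hpos
      · simp [← h0, not_lt_of_ge (le_refl (0:ℝ)), ← hσsq i]
      · rw [if_pos rfl, if_pos ⟨rfl, hpos⟩, ← hσsq i]
        field_simp
    · simp [hij]
  set V := Submodule.span ℝ (Set.range y) with hVdef
  have hyV : ∀ k, y k ∈ V := fun k => Submodule.subset_span (Set.mem_range_self k)
  have hfV : ∀ i, f i ∈ V := by
    intro i
    show (σ i)⁻¹ • Yu i ∈ V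
    refine Submodule.smul_mem _ _ ?_
    show (∑ k, u i k • y k) ∈ V
    exact Submodule.sum_mem _ fun k _ => Submodule.smul_mem _ _ (hyV k)
  have hyexp : ∀ k, y k = ∑ i, (u i k * σ i) • f i := by
    intro k
    have h1 : y k = ∑ i, u i k • Yu i := by
      have c1 : y k = ∑ j, (if k = j then (1:ℝ) else 0) • y j := by
        simp [ite_smul]
      have c2 : ∑ j, (if k = j then (1:ℝ) else 0) • y j = ∑ j, (∑ i, u i k * u i j) • y j := by
        exact Finset.sum_congr rfl fun j _ => by rw [hrow k j]
      have c3 : ∑ j, (∑ i, u i k * u i j) • y j = ∑ j, ∑ i, (u i k * u i j) • y j := by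
        exact Finset.sum_congr rfl fun j _ => by rw [Finset.sum_smul]
      have c4 : ∀ i : Fin n, ∑ j, (u i k * u i j) • y j = u i k • Yu i := by
        intro i
        show _ = u i k • ∑ j, u i j • y j
        rw [Finset.smul_sum]
        exact Finset.sum_congr rfl fun j _ => by rw [smul_smul]
      rw [c1, c2, c3, Finset.sum_comm, Finset.sum_congr rfl fun i _ => c4 i]
    have h2 : ∀ i, u i k • Yu i = (u i k * σ i) • f i := by
      intro i
      rcases eq_or_lt_of_le (hσ0 i) with h0 | hpos
      · rw [hYu0 i h0.symm, hf0 i h0.symm, smul_zero, smul_zero]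
      · show _ = (u i k * σ i) • ((σ i)⁻¹ • Yu i)
        rw [smul_smul]
        congr 1
        field_simp
    rw [h1, Finset.sum_congr rfl fun i _ => h2 i]
  have hVf : V ≤ Submodule.span ℝ (Set.range f) := by
    rw [hVdef, Submodule.span_le]
    rintro _ ⟨k, rfl⟩
    rw [hyexp k]
    exact Submodule.sum_mem _ fun i _ =>
      Submodule.smul_mem _ _ (Submodule.subset_span (Set.mem_range_self i))
  have hexp : ∀ v ∈ V, v = ∑ i, ⟪v, f i⟫ • f i := by
    intro v hv
    set w := v - ∑ i, ⟪v, f i⟫ • f i with hw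
    have hfw : ∀ j, ⟪f j, w⟫ = 0 := by
      intro j
      rcases eq_or_lt_of_le (hσ0 j) with h0 | hpos
      · rw [hf0 j h0.symm]
        exact inner_zero_left _
      · rw [hw, inner_sub_right, inner_sum]
        have e1 : ∀ i, ⟪f j, ⟪v, f i⟫ • f i⟫ = if j = i then ⟪v, f j⟫ else 0 := by
          intro i
          rw [real_inner_smul_right, hff j i]
          by_cases h : j = i
          · subst h
            simp [hpos]
          · simp [h]
        rw [Finset.sum_congr rfl fun i _ => e1 i, Finset.sum_ite_eq _ j (fun _ => ⟪v, f j⟫)]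
        simp [real_inner_comm]
    have hwV : w ∈ Submodule.span ℝ (Set.range f) := by
      rw [hw]
      refine Submodule.sub_mem _ (hVf hv) ?_
      exact Submodule.sum_mem _ fun i _ =>
        Submodule.smul_mem _ _ (Submodule.subset_span (Set.mem_range_self i))
    obtain ⟨c, hc⟩ := (Submodule.mem_span_range_iff_exists_fun ℝ).mp hwV
    have hww : ⟪w, w⟫ = (0:ℝ) := by
      calc ⟪w, w⟫ = ⟪∑ i, c i • f i, w⟫ := by rw [hc]
      _ = ∑ i, c i * ⟪f i, w⟫ := by
          rw [sum_inner]
          exact Finset.sum_congr rfl fun i _ => real_inner_smul_left (f i) w (c i)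
      _ = 0 := by
          rw [Finset.sum_congr rfl fun i (_ : i ∈ Finset.univ) => by rw [hfw i, mul_zero]]
          simp
    have hw0 : w = 0 := inner_self_eq_zero.mp hww
    rw [hw] at hw0
    exact (sub_eq_zero.mp hw0)
  have hnormV : ∀ v ∈ V, ‖v‖^2 = ∑ i, ⟪v, f i⟫^2 := by
    intro v hv
    rw [← real_inner_self_eq_norm_sq]
    have h := hexp v hv
    calc ⟪v, v⟫ = ⟪v, ∑ i, ⟪v, f i⟫ • f i⟫ := by rw [← h]
    _ = ∑ i, ⟪v, f i⟫^2 := by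
        rw [inner_sum]
        exact Finset.sum_congr rfl fun i _ => by rw [real_inner_smul_right]; ring
  have hQ : ∀ v ∈ V, ∑ k, ⟪y k, v⟫^2 = ∑ i, σ i^2 * ⟪v, f i⟫^2 := by
    intro v hv
    have ha : ∀ k, ⟪y k, v⟫ = ∑ i, (⟪v, f i⟫ * σ i) * u i k := by
      intro k
      have h := hexp v hv
      calc ⟪y k, v⟫ = ⟪y k, ∑ i, ⟪v, f i⟫ • f i⟫ := by rw [← h]
      _ = ∑ i, (⟪v, f i⟫ * σ i) * u i k := by
          rw [inner_sum]
          refine Finset.sum_congr rfl fun i _ => ?_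
          rw [real_inner_smul_right, hyf k i]
          ring
    rw [Finset.sum_congr rfl fun k (_ : k ∈ Finset.univ) => by rw [ha k]]
    rw [aux_sq_sum u hcol (fun i => ⟪v, f i⟫ * σ i)]
    exact Finset.sum_congr rfl fun i _ => by ring
  have htr : ∑ k, ‖y k‖^2 = ∑ i, σ i^2 := by
    have e1 : ∀ k, ‖y k‖^2 = ∑ i, σ i^2 * (u i k * u i k) := by
      intro k
      rw [hnormV (y k) (hyV k)]
      refine Finset.sum_congr rfl fun i _ => ?_
      rw [hyf k i]
      ring
    rw [Finset.sum_congr rfl fun k (_ : k ∈ Finset.univ) => e1 k, Finset.sum_comm]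
    refine Finset.sum_congr rfl fun i _ => ?_
    rw [← Finset.mul_sum, hcol i i, if_pos rfl, mul_one]
  set d := Module.finrank ℝ V with hddef
  set S := Finset.univ.filter (fun i : Fin n => 0 < σ i) with hSdef
  have hOrthSub : Orthonormal ℝ (fun i : {i : Fin n // 0 < σ i} => f (i : Fin n)) := by
    rw [orthonormal_iff_ite]
    intro i j
    rw [hff (i : Fin n) (j : Fin n)]
    by_cases h : (i : Fin n) = (j : Fin n)
    · have hij : i = j := Subtype.ext h
      subst hij
      simp [i.2]
    · have hij : i ≠ j := fun hh => h (congrArg _ hh)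
      simp [h, hij]
  have hspanf : (V : Submodule ℝ H)
      = Submodule.span ℝ (Set.range (fun i : {i : Fin n // 0 < σ i} => f (i : Fin n))) := by
    apply le_antisymm
    · rw [hVdef, Submodule.span_le]
      rintro _ ⟨k, rfl⟩
      rw [hyexp k]
      apply Submodule.sum_mem
      intro i _
      rcases eq_or_lt_of_le (hσ0 i) with h0 | hpos
      · rw [← h0, mul_zero, zero_smul]
        exact Submodule.zero_mem _
      · exact Submodule.smul_mem _ _ (Submodule.subset_span ⟨⟨i, hpos⟩, rfl⟩)
    · rw [Submodule.span_le]
      rintro _ ⟨i, rfl⟩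
      exact hfV (i : Fin n)
  have hdS : d = S.card := by
    have h1 : Module.finrank ℝ
        (Submodule.span ℝ (Set.range (fun i : {i : Fin n // 0 < σ i} => f (i : Fin n))))
        = Fintype.card {i : Fin n // 0 < σ i} :=
      finrank_span_eq_card hOrthSub.linearIndependent
    rw [hddef, hspanf, h1, Fintype.card_subtype]
  have hσd : ∀ i : Fin n, 0 < σ i ↔ (i : ℕ) < d := by
    intro i
    constructor
    · intro hpos
      have hsub : Finset.Iic i ⊆ S := by
        intro j hj
        rw [Finset.mem_Iic] at hj
        rw [hSdef, Finset.mem_filter]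
        exact ⟨Finset.mem_univ _, lt_of_lt_of_le hpos (hσanti hj)⟩
      have hcard := Finset.card_le_card hsub
      rw [Fin.card_Iic] at hcard
      omega
    · intro hid
      by_contra hneg
      have hz : σ i = 0 := le_antisymm (not_lt.mp hneg) (hσ0 i)
      have hsub : S ⊆ Finset.Iio i := by
        intro j hj
        rw [hSdef, Finset.mem_filter] at hj
        rw [Finset.mem_Iio]
        by_contra hji
        have h1 : σ j ≤ σ i := hσanti (not_lt.mp hji)
        rw [hz] at h1
        exact absurd hj.2 (not_lt.mpr h1)
      have hcard := Finset.card_le_card hsub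
      rw [Fin.card_Iio] at hcard
      omega
  have hdn : d ≤ n := by
    rw [hdS]
    simpa using Finset.card_le_univ S
  have hmd : m ≤ d := hm
  have hmn : m ≤ n := le_trans hmd hdn
  set D := Submodule.span ℝ (Set.range (fun j : Fin m => f (Fin.castLE hmn j))) with hDdef
  have hDV : D ≤ V := by
    rw [hDdef, hVdef, Submodule.span_le]
    rintro _ ⟨j, rfl⟩
    exact hfV _
  have hOrthm : Orthonormal ℝ (fun j : Fin m => f (Fin.castLE hmn j)) := by
    rw [orthonormal_iff_ite]
    intro a c
    rw [hff]
    have hposa : 0 < σ (Fin.castLE hmn a) := by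
      refine (hσd _).mpr ?_
      simp only [Fin.coe_castLE]
      exact lt_of_lt_of_le a.2 hmd
    by_cases h : a = c
    · subst h
      simp [hposa]
    · have hcc : Fin.castLE hmn a ≠ Fin.castLE hmn c := by
        intro hh
        exact h (Fin.ext (by simpa [Fin.ext_iff] using hh))
      simp [hcc, h]
  have hDrank : Module.finrank ℝ D = m := by
    rw [hDdef, finrank_span_eq_card hOrthm.linearIndependent, Fintype.card_fin]
  haveI hFD : FiniteDimensional ℝ V := FiniteDimensional.span_of_finite ℝ (Set.finite_range y)
  -- the lower bound for arbitrary competitors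
  have hlow : ∀ (D' : Submodule ℝ H), D' ≤ V → Module.finrank ℝ D' = m →
      (∑ i : Fin n, if m ≤ (i : ℕ) then σ i ^ 2 else 0) ≤ podCost y D' := by
    intro D' hD'V hD'rank
    haveI : FiniteDimensional ℝ D' := Submodule.finiteDimensional_of_le hD'V
    set b := stdOrthonormalBasis ℝ D' with hbdef
    set q : Fin (Module.finrank ℝ D') ≃ Fin m := finCongr hD'rank with hqdef
    set g : Fin m → H := fun j => ((b (q.symm j) : D') : H) with hgdef
    have hgD' : ∀ j, g j ∈ D' := fun j => (b (q.symm j)).2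
    have hgV : ∀ j, g j ∈ V := fun j => hD'V (hgD' j)
    have hgOrth : Orthonormal ℝ g := by
      rw [orthonormal_iff_ite]
      intro a c
      have hb := orthonormal_iff_ite.mp b.orthonormal (q.symm a) (q.symm c)
      have hco : ⟪g a, g c⟫ = (⟪b (q.symm a), b (q.symm c)⟫ : ℝ) := rfl
      rw [hco, hb]
      by_cases h : a = c
      · simp [h]
      · have h2 : q.symm a ≠ q.symm c := fun hh => h (q.symm.injective hh)
        simp [h, h2]
    have hrep : ∀ w ∈ D', ∃ a : Fin m → ℝ, w = ∑ j, a j • g j := by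
      intro w hw
      refine ⟨fun j => b.repr ⟨w, hw⟩ (q.symm j), ?_⟩
      have h1 := b.sum_repr ⟨w, hw⟩
      have h2 : ∑ j : Fin m, b.repr ⟨w, hw⟩ (q.symm j) • b (q.symm j)
          = ∑ i, b.repr ⟨w, hw⟩ i • b i :=
        Equiv.sum_comp q.symm (fun i => b.repr ⟨w, hw⟩ i • b i)
      have h3 : (⟨w, hw⟩ : D') = ∑ j : Fin m, b.repr ⟨w, hw⟩ (q.symm j) • b (q.symm j) := by
        rw [h2, h1]
      have h4 := congrArg (Subtype.val) h3
      simpa [hgdef] using h4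
    have hptw : ∀ k, ‖y k‖^2 - ∑ j, ⟪y k, g j⟫^2
        ≤ Metric.infDist (y k) (D' : Set H) ^ 2 := by
      intro k
      have hwbound : ∀ w ∈ D', ‖y k‖^2 - ∑ j, ⟪y k, g j⟫^2 ≤ ‖y k - w‖^2 := by
        intro w hw
        obtain ⟨a, ha⟩ := hrep w hw
        have h1 : ⟪y k, w⟫ = ∑ j, a j * ⟪y k, g j⟫ := by
          rw [ha, inner_sum]
          exact Finset.sum_congr rfl fun j _ => by rw [real_inner_smul_right]
        have h2 : ‖w‖^2 = ∑ j, (a j)^2 := by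
          rw [← real_inner_self_eq_norm_sq, ha, aux_inner_sum]
          rw [Finset.sum_congr rfl (fun i (_ : i ∈ Finset.univ) => Finset.sum_congr rfl
            (fun j _ => by rw [orthonormal_iff_ite.mp hgOrth i j]))]
          simp [sq]
        have h3 : ‖y k - w‖^2 = ‖y k‖^2 - 2 * ∑ j, a j * ⟪y k, g j⟫ + ∑ j, (a j)^2 := by
          rw [norm_sub_sq_real, h1, h2]
        have h4 : (0:ℝ) ≤ ∑ j, (a j - ⟪y k, g j⟫)^2 :=
          Finset.sum_nonneg fun j _ => sq_nonneg _
        have h5 : ∑ j, (a j - ⟪y k, g j⟫)^2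
            = ∑ j, (a j)^2 - 2 * ∑ j, a j * ⟪y k, g j⟫ + ∑ j, ⟪y k, g j⟫^2 := by
          rw [Finset.sum_congr rfl (fun j (_ : j ∈ Finset.univ) =>
            (by ring : (a j - ⟪y k, g j⟫)^2 = ((a j)^2 + ⟪y k, g j⟫^2) - 2 * (a j * ⟪y k, g j⟫)))]
          rw [Finset.sum_sub_distrib, Finset.sum_add_distrib, ← Finset.mul_sum]
          ring
        linarith
      by_cases hc : ‖y k‖^2 - ∑ j, ⟪y k, g j⟫^2 ≤ 0
      · exact le_trans hc (sq_nonneg _)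
      · push_neg at hc
        have hne : (D' : Set H).Nonempty := ⟨0, D'.zero_mem⟩
        set c0 := ‖y k‖^2 - ∑ j, ⟪y k, g j⟫^2 with hc0
        have hsq : Real.sqrt c0 ≤ Metric.infDist (y k) (D' : Set H) := by
          by_contra hlt
          push_neg at hlt
          obtain ⟨w, hwD, hdist⟩ := (Metric.infDist_lt_iff hne).mp hlt
          have h6 : c0 ≤ ‖y k - w‖^2 := hwbound w hwD
          rw [dist_eq_norm] at hdist
          nlinarith [Real.sq_sqrt hc.le, Real.sqrt_nonneg c0, norm_nonneg (y k - w)]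
        have h7 : (0:ℝ) ≤ Metric.infDist (y k) (D' : Set H) := Metric.infDist_nonneg
        nlinarith [Real.sq_sqrt hc.le, Real.sqrt_nonneg c0]
    have hsum1 : ∑ k, (‖y k‖^2 - ∑ j, ⟪y k, g j⟫^2) ≤ podCost y D' :=
      Finset.sum_le_sum fun k _ => hptw k
    set t : Fin n → ℝ := fun i => ∑ j, ⟪g j, f i⟫^2 with htdef
    have hswap : ∑ k, ∑ j, ⟪y k, g j⟫^2 = ∑ i, σ i^2 * t i := by
      rw [Finset.sum_comm]
      rw [Finset.sum_congr rfl fun j (_ : j ∈ Finset.univ) => hQ (g j) (hgV j)]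
      rw [Finset.sum_comm]
      refine Finset.sum_congr rfl fun i _ => ?_
      rw [htdef, Finset.mul_sum]
    have ht1 : ∀ i, t i ≤ 1 := by
      intro i
      have hb2 := aux_bessel hgOrth (f i)
      have he1 : ∑ j, ⟪f i, g j⟫^2 = t i := by
        rw [htdef]
        exact Finset.sum_congr rfl fun j _ => by rw [real_inner_comm]
      have hfi : ‖f i‖^2 ≤ 1 := by
        rw [← real_inner_self_eq_norm_sq, hff i i]
        split_ifs <;> norm_num
      linarith
    have ht0 : ∀ i, (0:ℝ) ≤ t i := fun i => Finset.sum_nonneg fun j _ => sq_nonneg _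
    have htsum : ∑ i, t i = (m : ℝ) := by
      have he1 : ∀ j, ∑ i, ⟪g j, f i⟫^2 = (1:ℝ) := by
        intro j
        rw [← hnormV (g j) (hgV j)]
        have := hgOrth.1 j
        rw [this]
        norm_num
      rw [htdef, Finset.sum_comm]
      rw [Finset.sum_congr rfl fun j (_ : j ∈ Finset.univ) => he1 j]
      simp
    have hlam_anti : ∀ i j : Fin n, i ≤ j → σ j^2 ≤ σ i^2 := by
      intro i j hij
      have h1 := hσanti hij
      nlinarith [hσ0 j, hσ0 i]
    have hkf := aux_kyfan hmn (fun i => σ i^2) t (fun i => sq_nonneg _) hlam_anti ht0 ht1 htsum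
    have hfinal : (∑ i : Fin n, if m ≤ (i:ℕ) then σ i^2 else 0)
        ≤ ∑ k, (‖y k‖^2 - ∑ j, ⟪y k, g j⟫^2) := by
      rw [Finset.sum_sub_distrib, htr, hswap]
      have he2 : ∑ i : Fin n, (if m ≤ (i:ℕ) then σ i^2 else 0)
          = ∑ i, σ i^2 - ∑ i : Fin n, (if (i:ℕ) < m then σ i^2 else 0) := by
        rw [← Finset.sum_sub_distrib]
        refine Finset.sum_congr rfl fun i _ => ?_
        by_cases h : (i:ℕ) < m
        · rw [if_neg (by omega), if_pos h]
          ring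
        · rw [if_pos (by omega), if_neg h]
          ring
      rw [he2]
      linarith
    exact le_trans hfinal hsum1
  set P : Fin n → H := fun k =>
    ∑ j : Fin m, ⟪y k, f (Fin.castLE hmn j)⟫ • f (Fin.castLE hmn j) with hPdef
  have hPD : ∀ k, P k ∈ D := by
    intro k
    show (∑ j : Fin m, ⟪y k, f (Fin.castLE hmn j)⟫ • f (Fin.castLE hmn j)) ∈ D
    rw [hDdef]
    exact Submodule.sum_mem _ fun j _ =>
      Submodule.smul_mem _ _ (Submodule.subset_span (Set.mem_range_self j))
  have hPalt : ∀ k, P k = ∑ i : Fin n, if (i:ℕ) < m then ⟪y k, f i⟫ • f i else 0 := by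
    intro k
    show ∑ j : Fin m, (fun i => ⟪y k, f i⟫ • f i) (Fin.castLE hmn j) = _
    rw [aux_castsum hmn (fun i => ⟪y k, f i⟫ • f i), Finset.sum_filter]
  have hPf : ∀ k i, ⟪P k, f i⟫ = if (i:ℕ) < m ∧ 0 < σ i then ⟪y k, f i⟫ else 0 := by
    intro k i
    rw [hPalt k, sum_inner]
    have e1 : ∀ i' : Fin n, ⟪(if (i':ℕ) < m then ⟪y k, f i'⟫ • f i' else 0), f i⟫
        = if i' = i then (if (i:ℕ) < m ∧ 0 < σ i then ⟪y k, f i⟫ else 0) else 0 := by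
      intro i'
      by_cases h1 : i' = i
      · subst h1
        rw [if_pos rfl]
        by_cases h2 : (i':ℕ) < m
        · rw [if_pos h2, real_inner_smul_left, hff i' i']
          by_cases h3 : 0 < σ i'
          · rw [if_pos ⟨rfl, h3⟩, if_pos ⟨h2, h3⟩, mul_one]
          · rw [if_neg (by tauto), if_neg (by tauto), mul_zero]
        · rw [if_neg h2, if_neg (by tauto), inner_zero_left]
      · rw [if_neg h1]
        by_cases h2 : (i':ℕ) < m
        · rw [if_pos h2, real_inner_smul_left, hff i' i, if_neg (by tauto), mul_zero]
        · rw [if_neg h2, inner_zero_left]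
    rw [Finset.sum_congr rfl fun i' _ => e1 i', Finset.sum_ite_eq' Finset.univ i
      (fun _ => if (i:ℕ) < m ∧ 0 < σ i then ⟪y k, f i⟫ else 0), if_pos (Finset.mem_univ i)]
  have hnormP : ∀ k, ‖y k - P k‖^2 = ∑ i : Fin n, if m ≤ (i:ℕ) then ⟪y k, f i⟫^2 else 0 := by
    intro k
    have hmem : y k - P k ∈ V := Submodule.sub_mem _ (hyV k) (hDV (hPD k))
    rw [hnormV _ hmem]
    refine Finset.sum_congr rfl fun i _ => ?_
    rw [inner_sub_left, hPf k i]
    by_cases h2 : (i:ℕ) < m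
    · rw [if_neg (show ¬ m ≤ (i:ℕ) by omega)]
      by_cases h3 : 0 < σ i
      · rw [if_pos (show (i:ℕ) < m ∧ 0 < σ i from ⟨h2, h3⟩)]
        ring
      · rw [if_neg (show ¬((i:ℕ) < m ∧ 0 < σ i) from by tauto)]
        have hz : σ i = 0 := le_antisymm (not_lt.mp h3) (hσ0 i)
        rw [hyf k i, hz, zero_mul]
        norm_num
    · rw [if_neg (show ¬((i:ℕ) < m ∧ 0 < σ i) from by tauto),
        if_pos (show m ≤ (i:ℕ) by omega)]
      ring
  have hsumP : ∑ k, ‖y k - P k‖^2 = ∑ i : Fin n, if m ≤ (i:ℕ) then σ i^2 else 0 := by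
    rw [Finset.sum_congr rfl fun k (_ : k ∈ Finset.univ) => hnormP k, Finset.sum_comm]
    refine Finset.sum_congr rfl fun i _ => ?_
    by_cases h : m ≤ (i:ℕ)
    · rw [Finset.sum_congr rfl fun k (_ : k ∈ Finset.univ) => if_pos h, if_pos h]
      have e2 : ∀ k, ⟪y k, f i⟫^2 = σ i^2 * (u i k * u i k) := fun k => by rw [hyf]; ring
      rw [Finset.sum_congr rfl fun k _ => e2 k, ← Finset.mul_sum, hcol i i, if_pos rfl, mul_one]
    · rw [Finset.sum_congr rfl fun k (_ : k ∈ Finset.univ) => if_neg h, if_neg h,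
        Finset.sum_const, smul_zero]
  have hup : podCost y D ≤ ∑ i : Fin n, if m ≤ (i:ℕ) then σ i^2 else 0 := by
    rw [← hsumP]
    refine Finset.sum_le_sum fun k _ => ?_
    have h1 : Metric.infDist (y k) (D : Set H) ≤ ‖y k - P k‖ := by
      have h2 := Metric.infDist_le_dist_of_mem (x := y k) (hPD k)
      rwa [dist_eq_norm] at h2
    have h2 := Metric.infDist_nonneg (s := (D : Set H)) (x := y k)
    nlinarith [norm_nonneg (y k - P k)]
  have hval : podCost y D = ∑ i : Fin n, if m ≤ (i:ℕ) then σ i^2 else 0 :=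
    le_antisymm hup (hlow D hDV hDrank)
  exact ⟨D, hDV, hDrank, fun D' h1 h2 => by rw [hval]; exact hlow D' h1 h2,
    σ, hσanti, hσ0, hσd, ⟨e, fun i => (hσsq i).trans (by rw [hμdef])⟩, hval⟩
end
end

section
/- Let A be a selfadjoint operator such that (id−P)(A + γ·id)(id−P) generates a contraction semigroup (equivalently is dissipative), where P is a finite-rank orthogonal projection and γ > 0. If Q is any orthogonal projection of finite rank with ‖QP‖ → 0 along a sequence (Qₙ), then the matrices Qₙ(id−P)A(id−P)Qₙ restricted to Ran(Qₙ) are uniformly Hurwitz for n large: all their eigenvalues λ satisfy λ ≤ −γ + o(1). -/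
open scoped RealInnerProductSpace

noncomputable section

def IsOrthProjOn {H : Type*} [NormedAddCommGroup H] [InnerProductSpace ℝ H]
    (Q : H →L[ℝ] H) (D : Submodule ℝ H) : Prop :=
  (∀ x, Q (Q x) = Q x) ∧ (∀ x y : H, ⟪Q x, y⟫ = ⟪x, Q y⟫) ∧ LinearMap.range (Q : H →ₗ[ℝ] H) = D

theorem stmt8
    {H : Type*} [NormedAddCommGroup H] [InnerProductSpace ℝ H] [CompleteSpace H]
    (A : H →ₗ.[ℝ] H)
    -- A is selfadjoint (symmetric on its domain)
    (hsym : ∀ x y : A.domain, ⟪(A x : H), (y : H)⟫ = ⟪(x : H), (A y : H)⟫)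
    (E : Submodule ℝ H) [FiniteDimensional ℝ E]
    (P : H →L[ℝ] H) (hP : IsOrthProjOn P E)
    (γ : ℝ) (hγ : 0 < γ)
    -- (id−P)(A+γ·id)(id−P) is dissipative
    (hdiss : ∀ (y : H) (h : (1 - P) y ∈ A.domain),
      ⟪(1 - P) ((A ⟨(1 - P) y, h⟩ : H) + γ • ((1 - P) y)), y⟫ ≤ 0)
    (D : ℕ → Submodule ℝ H) (Q : ℕ → H →L[ℝ] H)
    (hQ : ∀ n, IsOrthProjOn (Q n) (D n))
    (hDfin : ∀ n, FiniteDimensional ℝ (D n))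
    (hDdom : ∀ n, (D n : Set H) ⊆ A.domain)
    (hQP : Filter.Tendsto (fun n => ‖(Q n).comp P‖) Filter.atTop (nhds 0)) :
    -- uniformly Hurwitz: every eigenvalue μ of Qₙ(id−P)A(id−P)Qₙ on Ran(Qₙ)
    -- satisfies μ ≤ −γ + o(1) as n → ∞
    ∀ ε > 0, ∃ N : ℕ, ∀ n : ℕ, N ≤ n →
      ∀ (μ : ℝ) (x : H), x ∈ D n → x ≠ 0 →
        ∀ h : (1 - P) (Q n x) ∈ A.domain,
          Q n ((1 - P) (A ⟨(1 - P) (Q n x), h⟩)) = μ • x → μ ≤ -γ + ε := by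
  intro ε hε
  obtain ⟨N, hN⟩ := (Metric.tendsto_atTop.mp hQP) (ε / γ) (div_pos hε hγ)
  refine ⟨N, fun n hn μ x hxD hx0 h heig => ?_⟩
  obtain ⟨hQi, hQs, hQr⟩ := hQ n
  obtain ⟨hPi, hPs, hPr⟩ := hP
  -- Q n x = x
  rw [← hQr] at hxD
  obtain ⟨z, hz⟩ := hxD
  have hQx : Q n x = x := by
    have : Q n (Q n z) = Q n z := hQi z
    rw [show Q n z = x from hz] at this; exact this
  have hnorm : dist ‖(Q n).comp P‖ 0 < ε / γ := hN n hn
  have hQPn : ‖(Q n).comp P‖ < ε / γ := by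
    have := hnorm; rw [Real.dist_eq, sub_zero, abs_of_nonneg (norm_nonneg _)] at this
    exact this
  set v : A.domain := ⟨(1 - P) (Q n x), h⟩ with hv
  have hd := hdiss (Q n x) h
  -- expand (1-P) application
  have h1P : ∀ w : H, (1 - P) w = w - P w := fun w => by
    simp [ContinuousLinearMap.sub_apply]
  -- symmetry of 1-P
  have h1Ps : ∀ a b : H, ⟪(1 - P) a, b⟫ = ⟪a, (1 - P) b⟫ := fun a b => by
    rw [h1P, h1P, inner_sub_left, inner_sub_right, hPs]
  -- (1-P) idempotent
  have h1Pi : ∀ w : H, (1 - P) ((1 - P) w) = (1 - P) w := fun w => by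
    rw [h1P ((1 - P) w), h1P w, map_sub, hPi, sub_self, sub_zero]
  -- first term equals μ ‖x‖²
  have hterm1 : ⟪(1 - P) ((A v : H)), Q n x⟫ = μ * ‖x‖ ^ 2 := by
    calc ⟪(1 - P) ((A v : H)), Q n x⟫ = ⟪(1 - P) ((A v : H)), Q n (Q n x)⟫ := by
          rw [hQi]
      _ = ⟪Q n ((1 - P) ((A v : H))), Q n x⟫ := (hQs _ _).symm
      _ = ⟪μ • x, x⟫ := by rw [heig, hQx]
      _ = μ * ‖x‖ ^ 2 := by
          rw [real_inner_smul_left, real_inner_self_eq_norm_sq]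
  -- second term
  have hPxx : ⟪P x, x⟫ = ‖P x‖ ^ 2 := by
    have : ⟪P x, P x⟫ = ⟪x, P (P x)⟫ := hPs x (P x)
    rw [hPi] at this
    rw [real_inner_comm, ← this, real_inner_self_eq_norm_sq]
  have hterm2 : ⟪(1 - P) ((1 - P) (Q n x)), Q n x⟫ = ‖x‖ ^ 2 - ‖P x‖ ^ 2 := by
    rw [h1Pi, hQx, h1P, inner_sub_left, real_inner_self_eq_norm_sq, hPxx]
  -- combine dissipativity
  have hkey : μ * ‖x‖ ^ 2 + γ * (‖x‖ ^ 2 - ‖P x‖ ^ 2) ≤ 0 := by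
    have hd' : ⟪(1 - P) ((A v : H)), Q n x⟫
        + γ * ⟪(1 - P) ((1 - P) (Q n x)), Q n x⟫ ≤ 0 := by
      have := hd
      rw [map_add, inner_add_left, map_smul, real_inner_smul_left] at this
      exact this
    rw [hterm1, hterm2] at hd'
    linarith
  -- bound ‖P x‖²
  have hPxbound : ‖P x‖ ^ 2 ≤ ‖(Q n).comp P‖ * ‖x‖ ^ 2 := by
    have h1 : ‖P x‖ ^ 2 = ⟪x, Q n (P x)⟫ := by
      calc ‖P x‖ ^ 2 = ⟪P x, x⟫ := hPxx.symm
        _ = ⟪x, P x⟫ := real_inner_comm _ _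
        _ = ⟪Q n x, P x⟫ := by rw [hQx]
        _ = ⟪x, Q n (P x)⟫ := hQs x (P x)
    have h2 : ⟪x, Q n (P x)⟫ ≤ ‖x‖ * ‖Q n (P x)‖ := real_inner_le_norm _ _
    have h3 : ‖Q n (P x)‖ ≤ ‖(Q n).comp P‖ * ‖x‖ :=
      ((Q n).comp P).le_opNorm x
    have h4 : ‖x‖ * ‖Q n (P x)‖ ≤ ‖x‖ * (‖(Q n).comp P‖ * ‖x‖) :=
      mul_le_mul_of_nonneg_left h3 (norm_nonneg x)
    rw [h1]
    nlinarith [norm_nonneg x]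
  have hx2 : 0 < ‖x‖ ^ 2 := by
    have := norm_pos_iff.mpr hx0
    positivity
  have hμ : μ ≤ -γ + γ * ‖(Q n).comp P‖ := by
    have : μ * ‖x‖ ^ 2 ≤ (-γ + γ * ‖(Q n).comp P‖) * ‖x‖ ^ 2 := by
      nlinarith
    exact le_of_mul_le_mul_right this hx2
  have : γ * ‖(Q n).comp P‖ < ε := by
    have := (mul_lt_mul_of_pos_left hQPn hγ)
    rwa [mul_div_cancel₀ _ (ne_of_gt hγ)] at this
  linarith
end
end
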